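/- arXiv:1801.03595 — 2 statements merged into one kernel-verified Lean document; each statement's English description precedes it below -/
import Mathlib

section
/- If g_i(d) = β_i d^{-α_i} with β_i > 0 and α_i > 1 for i = 1,2, the functions d_1, d_2 : ℝ^n → ℝ are strictly convex and positive, and f(x,y) satisfies ∂²f/∂x∂y = 0, ∂f/∂x < 0, ∂f/∂y < 0, x·∂²f/∂x² + 2·∂f/∂x ≥ 0, and y·∂²f/∂y² + 2·∂f/∂y ≥ 0 for all x,y > 0, then the composite function z ↦ f(g_1(d_1(z)), g_2(d_2(z))) is strictly convex. -/
open Real Set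

/-- Constancy on `Ioi 0` from zero derivative. -/
lemma aux_const (G : ℝ → ℝ) (hG : ∀ t : ℝ, 0 < t → HasDerivAt G 0 t) :
    ∀ a b : ℝ, 0 < a → 0 < b → G a = G b := by
  have key : ∀ a b : ℝ, 0 < a → a ≤ b → G b = G a := by
    intro a b ha hab
    have hcont : ContinuousOn G (Icc a b) := fun x hx =>
      (hG x (lt_of_lt_of_le ha hx.1)).continuousAt.continuousWithinAt
    have hderiv : ∀ x ∈ Ico a b, HasDerivWithinAt G 0 (Ici x) x := fun x hx =>
      (hG x (lt_of_lt_of_le ha hx.1)).hasDerivWithinAt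
    exact constant_of_has_deriv_right_zero hcont hderiv b ⟨hab, le_rfl⟩
  intro a b ha hb
  rcases le_total a b with h | h
  · exact (key a b ha h).symm
  · exact key b a hb h

/-- One-variable lemma: convexity + strict monotonicity of `t ↦ φ (β * t ^ (-α))` on `Ioi 0`. -/
lemma aux_one_var (φ φ' φ'' : ℝ → ℝ) (β α : ℝ) (hβ : 0 < β) (hα : 1 < α)
    (hd1 : ∀ x : ℝ, 0 < x → HasDerivAt φ (φ' x) x)
    (hd2 : ∀ x : ℝ, 0 < x → HasDerivAt φ' (φ'' x) x)
    (hneg : ∀ x : ℝ, 0 < x → φ' x < 0)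
    (hcond : ∀ x : ℝ, 0 < x → 0 ≤ x * φ'' x + 2 * φ' x) :
    ConvexOn ℝ (Ioi 0) (fun t : ℝ => φ (β * t ^ (-α))) ∧
      StrictMonoOn (fun t : ℝ => φ (β * t ^ (-α))) (Ioi 0) := by
  set g : ℝ → ℝ := fun t => β * t ^ (-α) with hg_def
  set g' : ℝ → ℝ := fun t => β * (-α * t ^ (-α - 1)) with hg'_def
  have hgpos : ∀ t : ℝ, 0 < t → 0 < g t := fun t ht =>
    mul_pos hβ (rpow_pos_of_pos ht _)
  have hgderiv : ∀ t : ℝ, 0 < t → HasDerivAt g (g' t) t := by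
    intro t ht
    exact (Real.hasDerivAt_rpow_const (Or.inl ht.ne')).const_mul β
  have hg'neg : ∀ t : ℝ, 0 < t → g' t < 0 := by
    intro t ht
    have : 0 < α * t ^ (-α - 1) := mul_pos (by linarith) (rpow_pos_of_pos ht _)
    simp only [hg'_def]
    nlinarith
  set H : ℝ → ℝ := fun t => φ (g t) with hH_def
  set H' : ℝ → ℝ := fun t => φ' (g t) * g' t with hH'_def
  have hHderiv : ∀ t : ℝ, 0 < t → HasDerivAt H (H' t) t := by
    intro t ht
    exact (hd1 (g t) (hgpos t ht)).comp t (hgderiv t ht)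
  have hH'pos : ∀ t : ℝ, 0 < t → 0 < H' t := by
    intro t ht
    exact mul_pos_of_neg_of_neg (hneg _ (hgpos t ht)) (hg'neg t ht)
  set H'' : ℝ → ℝ := fun t =>
    (φ'' (g t) * g' t) * g' t + φ' (g t) * (β * (-α * ((-α - 1) * t ^ (-α - 1 - 1)))) with hH''_def
  have hH'deriv : ∀ t : ℝ, 0 < t → HasDerivAt H' (H'' t) t := by
    intro t ht
    have h1 : HasDerivAt (fun s => φ' (g s)) (φ'' (g t) * g' t) t :=
      (hd2 (g t) (hgpos t ht)).comp t (hgderiv t ht)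
    have h2 : HasDerivAt g' (β * (-α * ((-α - 1) * t ^ (-α - 1 - 1)))) t := by
      exact ((Real.hasDerivAt_rpow_const (p := -α - 1) (Or.inl ht.ne')).const_mul
        (-α)).const_mul β
    exact h1.mul h2
  have hH''pos : ∀ t : ℝ, 0 < t → 0 < H'' t := by
    intro t ht
    have hA : (0:ℝ) < t ^ (-α) := rpow_pos_of_pos ht _
    have hC : (0:ℝ) < t ^ (-α - 1 - 1) := rpow_pos_of_pos ht _
    have hBB : t ^ (-α - 1) * t ^ (-α - 1) = t ^ (-α) * t ^ (-α - 1 - 1) := by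
      rw [← rpow_add ht, ← rpow_add ht]; ring_nf
    have hx : 0 < β * t ^ (-α) := mul_pos hβ hA
    have hc := hcond _ hx
    have hn := hneg _ hx
    have hα0 : (0:ℝ) < α := by linarith
    have key : 0 < β * t ^ (-α) * φ'' (β * t ^ (-α)) * α + φ' (β * t ^ (-α)) * (α + 1) := by
      nlinarith [mul_nonneg hα0.le hc, mul_pos (neg_pos.2 hn) (sub_pos.2 hα)]
    have heq : H'' t = β * α * t ^ (-α - 1 - 1) *
        (β * t ^ (-α) * φ'' (β * t ^ (-α)) * α + φ' (β * t ^ (-α)) * (α + 1)) := by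
      simp only [hH''_def, hg'_def, hg_def]
      linear_combination (φ'' (β * t ^ (-α)) * β * β * α * α) * hBB
    rw [heq]
    exact mul_pos (by positivity) key
  -- continuity
  have hcont : ContinuousOn H (Ioi 0) := fun t ht =>
    (hHderiv t ht).continuousAt.continuousWithinAt
  have hderiv_eq : ∀ t : ℝ, 0 < t → deriv H t = H' t := fun t ht => (hHderiv t ht).deriv
  have hmono : StrictMonoOn H (Ioi 0) := by
    refine strictMonoOn_of_deriv_pos (convex_Ioi 0) hcont ?_
    intro t ht
    rw [interior_Ioi] at ht
    rw [hderiv_eq t ht]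
    exact hH'pos t ht
  refine ⟨?_, hmono⟩
  have hderiv2 : ∀ t ∈ interior (Ioi (0:ℝ)), 0 < deriv^[2] H t := by
    intro t ht
    rw [interior_Ioi] at ht
    have hev : deriv H =ᶠ[nhds t] H' := by
      filter_upwards [isOpen_Ioi.mem_nhds ht] with s hs using hderiv_eq s hs
    have : deriv^[2] H t = deriv (deriv H) t := by simp [Function.iterate_succ]
    rw [this, hev.deriv_eq, (hH'deriv t ht).deriv]
    exact hH''pos t ht
  exact (strictConvexOn_of_deriv2_pos (convex_Ioi 0) hcont hderiv2).convexOn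

/-- Composition of a convex strictly-monotone function with a strictly convex positive one. -/
lemma aux_comp {E : Type*} [NormedAddCommGroup E] [NormedSpace ℝ E]
    (h : ℝ → ℝ) (d : E → ℝ)
    (hd : StrictConvexOn ℝ Set.univ d) (hdpos : ∀ z, 0 < d z)
    (hconv : ConvexOn ℝ (Ioi 0) h) (hmono : StrictMonoOn h (Ioi 0)) :
    StrictConvexOn ℝ Set.univ (fun z => h (d z)) := by
  refine ⟨convex_univ, ?_⟩
  intro x _ y _ hxy a b ha hb hab
  have h1 : d (a • x + b • y) < a * d x + b * d y := by
    simpa [smul_eq_mul] using hd.2 (mem_univ x) (mem_univ y) hxy ha hb hab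
  have hm1 : d (a • x + b • y) ∈ Ioi (0:ℝ) := hdpos _
  have hm2 : a * d x + b * d y ∈ Ioi (0:ℝ) := by
    have h1 := hdpos x; have h2 := hdpos y
    exact mem_Ioi.2 (by positivity)
  have step1 : h (d (a • x + b • y)) < h (a * d x + b * d y) := hmono hm1 hm2 h1
  have step2 : h (a * d x + b * d y) ≤ a * h (d x) + b * h (d y) := by
    simpa [smul_eq_mul] using hconv.2 (mem_Ioi.2 (hdpos x)) (mem_Ioi.2 (hdpos y)) ha.le hb.le hab
  calc h (d (a • x + b • y)) < a * h (d x) + b * h (d y) := lt_of_lt_of_le step1 step2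
    _ = a • h (d x) + b • h (d y) := by simp [smul_eq_mul]

/-- Lemma (for Condition 1): if `g_i(d) = β_i d^{-α_i}` with `β_i > 0`, `α_i > 1`,
`d_1, d_2` are strictly convex positive functions, and `f` satisfies Condition 1
(zero mixed partial, negative first partials, and `x f_xx + 2 f_x ≥ 0`,
`y f_yy + 2 f_y ≥ 0` on the positive quadrant), then
`z ↦ f (g_1 (d_1 z), g_2 (d_2 z))` is strictly convex. -/
theorem stmt_0 (n : ℕ)
    (f fx fy fxx fyy : ℝ → ℝ → ℝ)
    (β₁ β₂ α₁ α₂ : ℝ) (hβ₁ : 0 < β₁) (hβ₂ : 0 < β₂) (hα₁ : 1 < α₁) (hα₂ : 1 < α₂)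
    (d₁ d₂ : EuclideanSpace ℝ (Fin n) → ℝ)
    (hd₁ : StrictConvexOn ℝ Set.univ d₁) (hd₂ : StrictConvexOn ℝ Set.univ d₂)
    (hd₁pos : ∀ z, 0 < d₁ z) (hd₂pos : ∀ z, 0 < d₂ z)
    -- first partial derivatives
    (hfx : ∀ x y : ℝ, 0 < x → 0 < y → HasDerivAt (fun t => f t y) (fx x y) x)
    (hfy : ∀ x y : ℝ, 0 < x → 0 < y → HasDerivAt (fun t => f x t) (fy x y) y)
    -- second partial derivatives
    (hfxx : ∀ x y : ℝ, 0 < x → 0 < y → HasDerivAt (fun t => fx t y) (fxx x y) x)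
    (hfyy : ∀ x y : ℝ, 0 < x → 0 < y → HasDerivAt (fun t => fy x t) (fyy x y) y)
    -- mixed partial derivative is zero
    (hfxy : ∀ x y : ℝ, 0 < x → 0 < y → HasDerivAt (fun t => fy t y) 0 x)
    -- sign conditions of Condition 1
    (hfx_neg : ∀ x y : ℝ, 0 < x → 0 < y → fx x y < 0)
    (hfy_neg : ∀ x y : ℝ, 0 < x → 0 < y → fy x y < 0)
    (hcond1 : ∀ x y : ℝ, 0 < x → 0 < y → 0 ≤ x * fxx x y + 2 * fx x y)
    (hcond2 : ∀ x y : ℝ, 0 < x → 0 < y → 0 ≤ y * fyy x y + 2 * fy x y) :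
    StrictConvexOn ℝ Set.univ
      (fun z => f (β₁ * d₁ z ^ (-α₁)) (β₂ * d₂ z ^ (-α₂))) := by
  -- Step 1: separation `f x y = f x 1 + f 1 y - f 1 1` on the positive quadrant
  have hfy_const : ∀ x y : ℝ, 0 < x → 0 < y → fy x y = fy 1 y := by
    intro x y hx hy
    exact aux_const (fun s => fy s y) (fun s hs => hfxy s y hs hy) x 1 hx one_pos
  have hsep : ∀ x y : ℝ, 0 < x → 0 < y → f x y = f x 1 + f 1 y - f 1 1 := by
    intro x y hx hy
    have hD : ∀ t : ℝ, 0 < t → HasDerivAt (fun t => f x t - f 1 t) 0 t := by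
      intro t ht
      have h1 := (hfy x t hx ht).sub (hfy 1 t one_pos ht)
      have : fy x t - fy 1 t = 0 := by rw [hfy_const x t hx ht]; ring
      rwa [this] at h1
    have := aux_const _ hD y 1 hy one_pos
    linarith
  -- Step 2: each single-variable composite is strictly convex
  have h₁ := aux_one_var (fun s => f s 1) (fun s => fx s 1) (fun s => fxx s 1) β₁ α₁ hβ₁ hα₁
    (fun s hs => hfx s 1 hs one_pos) (fun s hs => hfxx s 1 hs one_pos)
    (fun s hs => hfx_neg s 1 hs one_pos) (fun s hs => hcond1 s 1 hs one_pos)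
  have h₂ := aux_one_var (fun s => f 1 s) (fun s => fy 1 s) (fun s => fyy 1 s) β₂ α₂ hβ₂ hα₂
    (fun s hs => hfy 1 s one_pos hs) (fun s hs => hfyy 1 s one_pos hs)
    (fun s hs => hfy_neg 1 s one_pos hs) (fun s hs => hcond2 1 s one_pos hs)
  have S₁ : StrictConvexOn ℝ Set.univ (fun z => f (β₁ * d₁ z ^ (-α₁)) 1) :=
    aux_comp _ d₁ hd₁ hd₁pos h₁.1 h₁.2
  have S₂ : StrictConvexOn ℝ Set.univ (fun z => f 1 (β₂ * d₂ z ^ (-α₂))) :=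
    aux_comp _ d₂ hd₂ hd₂pos h₂.1 h₂.2
  have hfun : (fun z => f (β₁ * d₁ z ^ (-α₁)) (β₂ * d₂ z ^ (-α₂))) =
      fun z => (f (β₁ * d₁ z ^ (-α₁)) 1 + f 1 (β₂ * d₂ z ^ (-α₂))) + (-(f 1 1)) := by
    funext z
    have hp1 : (0:ℝ) < β₁ * d₁ z ^ (-α₁) := mul_pos hβ₁ (rpow_pos_of_pos (hd₁pos z) _)
    have hp2 : (0:ℝ) < β₂ * d₂ z ^ (-α₂) := mul_pos hβ₂ (rpow_pos_of_pos (hd₂pos z) _)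
    rw [hsep _ _ hp1 hp2]; ring
  rw [hfun]
  exact (S₁.add S₂).add_const _
end

section
/- (Optimal position on axis or boundary) Suppose f : (0,∞)² → ℝ is strictly decreasing in each argument, g_b(x) = β₀ d_b(x)^{-α₀} with d_b strictly decreasing along any straight segment toward the BS, and g_u is the nested segmented gain. If x* minimizes x ↦ f(g_u(x), g_b(x)) over ℝ², then either x* lies on the line segment through x_u and x_b (projected BS–user axis), or x* lies on the topological boundary of some segment D_k (i.e., x* is not in the interior of any D_k off the axis). Precisely: if x* is in the interior of D_k and off the axis, there exists a direction δ and ε > 0 with x* + εδ ∈ D_k, ‖x* + εδ - x_u‖ < ‖x* - x_u‖, and ‖x* + εδ - x_b‖ < ‖x* - x_b‖, contradicting optimality. -/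
open Real Set RealInnerProductSpace

/-- The optimal UAV position is either on the BS–user axis or on the boundary
of a propagation segment. -/
theorem stmt_16 (K : ℕ) (hK : 0 < K)
    (xu xb : ℂ) (hne : xu ≠ xb)
    (hu hb : ℝ) (hhu : 0 < hu) (hhb : 0 < hb)
    (du db : ℂ → ℝ)
    (hdu : ∀ x, du x = Real.sqrt (‖x - xu‖^2 + hu^2))
    (hdb : ∀ x, db x = Real.sqrt (‖x - xb‖^2 + hb^2))
    (β α : Fin K → ℝ) (hβ : ∀ k, 0 < β k) (hα : ∀ k, 1 < α k)
    (β₀ α₀ : ℝ) (hβ₀ : 0 < β₀) (hα₀ : 1 < α₀)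
    (D : Fin K → Set ℂ)
    (hdisj : Pairwise (Function.onFun Disjoint D))
    (hcover : (⋃ k, D k) = Set.univ)
    -- ordering: fictitious gains strictly decrease with the segment index
    (horder : ∀ (d : ℝ), 0 < d → ∀ (k j : Fin K), j < k →
      β k * d ^ (-(α k)) < β j * d ^ (-(α j)))
    (gu gb : ℂ → ℝ)
    (hgu : ∀ x, gu x = ∑ k : Fin K,
      Set.indicator (D k) (fun y => β k * du y ^ (-(α k))) x)
    (hgb : ∀ x, gb x = β₀ * db x ^ (-α₀))
    (f : ℝ → ℝ → ℝ)
    (hf_x : ∀ y : ℝ, 0 < y → StrictAntiOn (fun x => f x y) (Set.Ioi 0))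
    (hf_y : ∀ x : ℝ, 0 < x → StrictAntiOn (fun y => f x y) (Set.Ioi 0))
    (xstar : ℂ)
    (hopt : ∀ x : ℂ, f (gu xstar) (gb xstar) ≤ f (gu x) (gb x)) :
    (∃ t : ℝ, xstar = xu + (t : ℂ) * (xb - xu)) ∨
    (∃ k : Fin K, xstar ∈ frontier (D k)) := by
  by_cases hline : ∃ t : ℝ, xstar = xu + (t : ℂ) * (xb - xu)
  · exact Or.inl hline
  right
  by_contra hfront
  push_neg at hfront
  -- xstar belongs to some segment
  have hx : xstar ∈ ⋃ k, D k := hcover ▸ Set.mem_univ xstar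
  obtain ⟨k₀, hk₀⟩ := Set.mem_iUnion.mp hx
  -- xstar is in the interior of D k₀
  have hint : xstar ∈ interior (D k₀) := by
    by_contra h
    exact hfront k₀ ⟨subset_closure hk₀, h⟩
  obtain ⟨r, hr, hball⟩ := Metric.mem_nhds_iff.mp (mem_interior_iff_mem_nhds.mp hint)
  -- the two directions toward the user and the BS
  set u : ℂ := xu - xstar with hu_def
  set v : ℂ := xb - xstar with hv_def
  have hu0 : u ≠ 0 := by
    intro h
    exact hline ⟨0, by push_cast; rw [zero_mul, add_zero]; exact (sub_eq_zero.mp h).symm⟩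
  have hv0 : v ≠ 0 := by
    intro h
    exact hline ⟨1, by push_cast; rw [one_mul]; linear_combination -(sub_eq_zero.mp h)⟩
  have ha : (0:ℝ) < ‖u‖ := norm_pos_iff.mpr hu0
  have hb' : (0:ℝ) < ‖v‖ := norm_pos_iff.mpr hv0
  -- u and v are not opposite-parallel (strict Cauchy–Schwarz)
  have hnotpar : ‖v‖ • (-u) ≠ ‖-u‖ • v := by
    intro h
    rw [norm_neg, smul_neg] at h
    -- then xstar lies on the line
    apply hline
    refine ⟨‖u‖ / (‖u‖ + ‖v‖), ?_⟩
    have hsum : (0:ℝ) < ‖u‖ + ‖v‖ := by linarith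
    have h' : ‖v‖ • (xu - xstar) + ‖u‖ • (xb - xstar) = 0 := by
      rw [← hu_def, ← hv_def]; linear_combination -h
    have h2 : (‖v‖:ℂ) * (xu - xstar) + (‖u‖:ℂ) * (xb - xstar) = 0 := by
      simpa [Complex.real_smul] using h'
    have hsumC : ((‖u‖ : ℂ) + ‖v‖) ≠ 0 := by
      have : ((‖u‖ + ‖v‖ : ℝ) : ℂ) ≠ 0 := by exact_mod_cast ne_of_gt hsum
      push_cast at this; exact this
    apply mul_left_cancel₀ hsumC
    push_cast
    have h3 : ((‖u‖:ℂ) + ‖v‖) * ((‖u‖:ℂ) / ((‖u‖:ℂ) + ‖v‖)) = (‖u‖:ℂ) := by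
      rw [← mul_div_assoc]; exact mul_div_cancel_left₀ _ hsumC
    rw [mul_add, ← mul_assoc, h3]
    linear_combination -h2
  have hCS : -(‖u‖ * ‖v‖) < ⟪u, v⟫ := by
    have := inner_lt_norm_mul_iff_real.mpr hnotpar
    rw [norm_neg, inner_neg_left] at this
    linarith
  -- the improving direction
  set δ : ℂ := ‖v‖ • u + ‖u‖ • v with hδ_def
  have hδu : (0:ℝ) < ⟪δ, u⟫ := by
    have : ⟪δ, u⟫ = ‖v‖ * ⟪u, u⟫ + ‖u‖ * ⟪v, u⟫ := by
      rw [hδ_def, inner_add_left, real_inner_smul_left, real_inner_smul_left]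
    rw [this, real_inner_self_eq_norm_sq, real_inner_comm]
    nlinarith
  have hδv : (0:ℝ) < ⟪δ, v⟫ := by
    have : ⟪δ, v⟫ = ‖v‖ * ⟪u, v⟫ + ‖u‖ * ⟪v, v⟫ := by
      rw [hδ_def, inner_add_left, real_inner_smul_left, real_inner_smul_left]
    rw [this, real_inner_self_eq_norm_sq]
    nlinarith
  have hδ0 : δ ≠ 0 := by
    intro h
    rw [h] at hδu
    simp at hδu
  have hδn : (0:ℝ) < ‖δ‖ := norm_pos_iff.mpr hδ0
  -- step size
  set t : ℝ := min (r / (2 * ‖δ‖)) (min (⟪δ, u⟫ / ‖δ‖^2) (⟪δ, v⟫ / ‖δ‖^2)) with ht_def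
  have ht : 0 < t := by
    apply lt_min (by positivity) (lt_min (by positivity) (by positivity))
  set x : ℂ := xstar + t • δ with hx_def
  -- x stays in D k₀
  have hxD : x ∈ D k₀ := by
    apply hball
    rw [Metric.mem_ball, hx_def]
    have : dist (xstar + t • δ) xstar = t * ‖δ‖ := by
      rw [dist_eq_norm]
      simp [norm_smul, abs_of_pos ht]
    rw [this]
    have h1 : t ≤ r / (2 * ‖δ‖) := min_le_left _ _
    have : t * ‖δ‖ ≤ r / 2 := by
      rw [div_mul_eq_div_div] at h1
      calc t * ‖δ‖ ≤ r / 2 / ‖δ‖ * ‖δ‖ := by nlinarith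
        _ = r / 2 := div_mul_cancel₀ _ (ne_of_gt hδn)
    linarith
  -- x is strictly closer to xu and to xb
  have key : ∀ w : ℂ, 0 < ⟪δ, w⟫ → t ≤ ⟪δ, w⟫ / ‖δ‖^2 →
      ‖x - (xstar + w)‖ < ‖w‖ := by
    intro w hw htw
    have hexp : ‖x - (xstar + w)‖^2 = t^2 * ‖δ‖^2 - 2 * (t * ⟪δ, w⟫) + ‖w‖^2 := by
      have : x - (xstar + w) = t • δ - w := by rw [hx_def]; ring
      rw [this, norm_sub_sq_real, real_inner_smul_left, norm_smul]
      rw [Real.norm_eq_abs, abs_of_pos ht]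
      ring
    have hwn : 0 < ‖w‖ := by
      rcases eq_or_ne w 0 with h | h
      · rw [h] at hw; simp at hw
      · exact norm_pos_iff.mpr h
    have hsq : ‖x - (xstar + w)‖^2 < ‖w‖^2 := by
      rw [hexp]
      have : t * ‖δ‖^2 ≤ ⟪δ, w⟫ :=
        (le_div_iff₀ (by positivity : (0:ℝ) < ‖δ‖^2)).mp htw
      nlinarith
    exact lt_of_pow_lt_pow_left₀ 2 (le_of_lt hwn) hsq
  have hxu : ‖x - xu‖ < ‖xstar - xu‖ := by
    have := key u hδu (le_trans (min_le_right _ _) (min_le_left _ _))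
    rw [hu_def] at this
    simpa [norm_sub_rev xstar xu] using this
  have hxb : ‖x - xb‖ < ‖xstar - xb‖ := by
    have := key v hδv (le_trans (min_le_right _ _) (min_le_right _ _))
    rw [hv_def] at this
    simpa [norm_sub_rev xstar xb] using this
  -- distances strictly decrease
  have hdux : du x < du xstar := by
    rw [hdu, hdu]
    apply Real.sqrt_lt_sqrt (by positivity)
    have := pow_lt_pow_left₀ hxu (norm_nonneg _) two_ne_zero
    linarith
  have hdbx : db x < db xstar := by
    rw [hdb, hdb]
    apply Real.sqrt_lt_sqrt (by positivity)
    have := pow_lt_pow_left₀ hxb (norm_nonneg _) two_ne_zero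
    linarith
  have hdupos : ∀ y, 0 < du y := fun y => by rw [hdu]; positivity
  have hdbpos : ∀ y, 0 < db y := fun y => by rw [hdb]; positivity
  -- value of gu on D k₀
  have hguval : ∀ y, y ∈ D k₀ → gu y = β k₀ * du y ^ (-(α k₀)) := by
    intro y hy
    rw [hgu]
    rw [Finset.sum_eq_single k₀]
    · exact Set.indicator_of_mem hy _
    · intro j _ hj
      apply Set.indicator_of_notMem
      intro hyj
      exact Set.disjoint_left.mp (hdisj hj) hyj hy
    · intro h; exact absurd (Finset.mem_univ k₀) h
  have hgupos : ∀ y k, 0 < β k * du y ^ (-(α k)) := fun y k =>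
    mul_pos (hβ k) (Real.rpow_pos_of_pos (hdupos y) _)
  have hgbpos : ∀ y, 0 < gb y := fun y => by
    rw [hgb]; exact mul_pos hβ₀ (Real.rpow_pos_of_pos (hdbpos y) _)
  -- gains strictly increase at x
  have hgux : gu xstar < gu x := by
    rw [hguval xstar hk₀, hguval x hxD]
    apply mul_lt_mul_of_pos_left _ (hβ k₀)
    exact Real.rpow_lt_rpow_of_neg (hdupos x) hdux (by linarith [hα k₀])
  have hgbx : gb xstar < gb x := by
    rw [hgb, hgb]
    apply mul_lt_mul_of_pos_left _ hβ₀
    exact Real.rpow_lt_rpow_of_neg (hdbpos x) hdbx (by linarith)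
  have hgusp : gu xstar ∈ Set.Ioi (0:ℝ) := by
    rw [hguval xstar hk₀]; exact hgupos xstar k₀
  have hguxp : gu x ∈ Set.Ioi (0:ℝ) := by
    rw [hguval x hxD]; exact hgupos x k₀
  -- f strictly decreases: contradiction with optimality
  have h1 : f (gu x) (gb x) < f (gu xstar) (gb x) :=
    hf_x (gb x) (hgbpos x) hgusp hguxp hgux
  have h2 : f (gu xstar) (gb x) < f (gu xstar) (gb xstar) :=
    hf_y (gu xstar) hgusp (hgbpos xstar) (hgbpos x) hgbx
  have := hopt x
  linarith
end
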